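/- arXiv:0911.4522 — 2 statements merged into one kernel-verified Lean document; each statement's English description precedes it below -/
import Mathlib

section
/- The function φ(x,y) = (1-x)·h((γ-y)/(1-x)), where h is the binary entropy function, is concave on the region {(x,y) : 0 < x < 1, 0 < y < 1, 0 < γ-y < 1-x}. -/
/-!
The binary entropy `h` is concave on `[0, 1]`, and `φ` is its perspective `(t, a) ↦ t h(a / t)`
composed with the affine map `(x, y) ↦ (1 - x, γ - y)`. Perspectives of concave functions are
concave: for a convex combination `(t, a) = λ (t₁, a₁) + μ (t₂, a₂)` the quotient `a / t` is the
convex combination of `a₁ / t₁` and `a₂ / t₂` with weights `λ t₁ / t` and `μ t₂ / t`.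
-/

/-- Binary entropy function (base 2). -/
noncomputable def binEnt (p : ℝ) : ℝ :=
  -(p * Real.logb 2 p) - (1 - p) * Real.logb 2 (1 - p)

open Set

section Perspective

variable {E : Type*} [AddCommGroup E] [Module ℝ E]

theorem inv_smul_add_eq_weighted {t₁ t₂ a b : ℝ} (ht₁ : 0 < t₁) (ht₂ : 0 < t₂)
    (ht : 0 < a * t₁ + b * t₂) (x₁ x₂ : E) :
    (a * t₁ + b * t₂)⁻¹ • (a • x₁ + b • x₂) =
      (a * t₁ / (a * t₁ + b * t₂)) • (t₁⁻¹ • x₁) + (b * t₂ / (a * t₁ + b * t₂)) • (t₂⁻¹ • x₂) := by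
  simp only [smul_add, smul_smul]
  congr 2 <;> field_simp

theorem perspective_weights {t₁ t₂ a b : ℝ} (ht₁ : 0 < t₁) (ht₂ : 0 < t₂) (ha : 0 ≤ a)
    (hb : 0 ≤ b) (hab : a + b = 1) :
    0 < a * t₁ + b * t₂ ∧ 0 ≤ a * t₁ / (a * t₁ + b * t₂) ∧ 0 ≤ b * t₂ / (a * t₁ + b * t₂) ∧
      a * t₁ / (a * t₁ + b * t₂) + b * t₂ / (a * t₁ + b * t₂) = 1 := by
  have ht : 0 < a * t₁ + b * t₂ := convex_Ioi (0 : ℝ) ht₁ ht₂ ha hb hab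
  exact ⟨ht, by positivity, by positivity, by rw [← add_div, div_self ht.ne']⟩

theorem ConcaveOn.perspective {s : Set E} {f : E → ℝ} (hf : ConcaveOn ℝ s f) :
    ConcaveOn ℝ {p : ℝ × E | 0 < p.1 ∧ p.1⁻¹ • p.2 ∈ s} (fun p => p.1 * f (p.1⁻¹ • p.2)) := by
  refine ⟨?_, ?_⟩
  · rintro ⟨t₁, x₁⟩ ⟨ht₁ : 0 < t₁, hx₁⟩ ⟨t₂, x₂⟩ ⟨ht₂ : 0 < t₂, hx₂⟩ a b ha hb hab
    obtain ⟨ht, hw₁, hw₂, hw⟩ := perspective_weights ht₁ ht₂ ha hb hab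
    simp only [Prod.smul_mk, Prod.mk_add_mk, smul_eq_mul, mem_ofPred_eq]
    rw [inv_smul_add_eq_weighted ht₁ ht₂ ht]
    exact ⟨ht, hf.1 hx₁ hx₂ hw₁ hw₂ hw⟩
  · rintro ⟨t₁, x₁⟩ ⟨ht₁ : 0 < t₁, hx₁⟩ ⟨t₂, x₂⟩ ⟨ht₂ : 0 < t₂, hx₂⟩ a b ha hb hab
    obtain ⟨ht, hw₁, hw₂, hw⟩ := perspective_weights ht₁ ht₂ ha hb hab
    simp only [Prod.smul_mk, Prod.mk_add_mk, smul_eq_mul]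
    rw [inv_smul_add_eq_weighted ht₁ ht₂ ht]
    calc a * (t₁ * f (t₁⁻¹ • x₁)) + b * (t₂ * f (t₂⁻¹ • x₂))
        = (a * t₁ + b * t₂) * (a * t₁ / (a * t₁ + b * t₂) * f (t₁⁻¹ • x₁) +
            b * t₂ / (a * t₁ + b * t₂) * f (t₂⁻¹ • x₂)) := by field_simp
      _ ≤ _ := mul_le_mul_of_nonneg_left (hf.2 hx₁ hx₂ hw₁ hw₂ hw) ht.le

end Perspective

theorem binEnt_eq_binEntropy_div_log_two (p : ℝ) :
    binEnt p = Real.binEntropy p / Real.log 2 := by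
  simp only [binEnt, Real.binEntropy, Real.logb, Real.log_inv]
  ring

theorem concaveOn_binEnt : ConcaveOn ℝ (Icc 0 1) binEnt := by
  refine (Real.strictConcave_binEntropy.concaveOn.smul
    (inv_nonneg.2 (Real.log_nonneg one_le_two))).congr fun p _ => ?_
  simp only [smul_eq_mul, binEnt_eq_binEntropy_div_log_two]
  ring

theorem phi_concave_general (γ : ℝ) :
    ConcaveOn ℝ
      {p : ℝ × ℝ | 0 < p.1 ∧ p.1 < 1 ∧ 0 < p.2 ∧ p.2 < 1 ∧
        0 < γ - p.2 ∧ γ - p.2 < 1 - p.1}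
      (fun p : ℝ × ℝ => (1 - p.1) * binEnt ((γ - p.2) / (1 - p.1))) := by
  have hconv : Convex ℝ {p : ℝ × ℝ | 0 < p.1 ∧ p.1 < 1 ∧ 0 < p.2 ∧ p.2 < 1 ∧
      0 < γ - p.2 ∧ γ - p.2 < 1 - p.1} := by
    refine convex_iff_forall_pos.2 ?_
    rintro p ⟨hp₁, hp₂, hp₃, hp₄, hp₅, hp₆⟩ q ⟨hq₁, hq₂, hq₃, hq₄, hq₅, hq₆⟩ a b ha hb hab
    simp only [mem_ofPred_eq, Prod.fst_add, Prod.snd_add, Prod.smul_fst, Prod.smul_snd,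
      smul_eq_mul]
    obtain rfl : b = 1 - a := by linarith
    refine ⟨?_, ?_, ?_, ?_, ?_, ?_⟩ <;> nlinarith
  let g : ℝ × ℝ →ᵃ[ℝ] ℝ × ℝ := AffineMap.const ℝ (ℝ × ℝ) (1, γ) - AffineMap.id ℝ (ℝ × ℝ)
  have hg : ∀ p, g p = (1 - p.1, γ - p.2) := fun p => rfl
  refine ((concaveOn_binEnt.perspective.comp_affineMap g).subset ?_ hconv).congr ?_
  · rintro p ⟨-, -, -, -, ha, hat⟩
    have ht : 0 < 1 - p.1 := ha.trans hat
    simp only [mem_preimage, hg, mem_ofPred_eq, smul_eq_mul, inv_mul_eq_div]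
    exact ⟨ht, (div_pos ha ht).le, (div_le_one ht).2 hat.le⟩
  · intro p _
    simp only [Function.comp_apply, hg, smul_eq_mul, inv_mul_eq_div]

/-- φ(x,y) = (1-x)·h((γ-y)/(1-x)) is concave on the region
    {(x,y) : 0 < x < 1, 0 < y < 1, 0 < γ-y < 1-x}. -/
theorem phi_concave (γ : ℝ) (hγ0 : 0 < γ) (hγ1 : γ < 1) :
    ConcaveOn ℝ
      {p : ℝ × ℝ | 0 < p.1 ∧ p.1 < 1 ∧ 0 < p.2 ∧ p.2 < 1 ∧
        0 < γ - p.2 ∧ γ - p.2 < 1 - p.1}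
      (fun p : ℝ × ℝ => (1 - p.1) * binEnt ((γ - p.2) / (1 - p.1))) :=
  phi_concave_general γ
end

section
/- For t an integer with 2 ≤ 2t+1 ≤ d₀ and n fixed, define F_{n,t}(σ) = h(σ) - σn·log₂x + σ·log₂(Σ_{i=t+1}^n C(n,i)xⁱ) + (1-σ)·log₂(Σ_{i=0}^t C(n,i)xⁱ), where x > 0 solves Σ_{i=0}^t Σ_{j=t+1}^n C(n,i)C(n,j)(σ(n-j) - i(1-σ))x^{i+j-t-1} = 0. Then F_{n,t}(σ) equals the maximum of g(z) = h(z) + Σᵢ zᵢ log₂ C(n,i) over probability vectors z on {0,...,n} subject to Σᵢ i·zᵢ = σn and Σ_{i=t+1}^n zᵢ = σ. -/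
/-- Shannon entropy (base 2) of a vector, with the convention 0·log 0 = 0. -/
noncomputable def shannonEnt {k : ℕ} (z : Fin k → ℝ) : ℝ :=
  -∑ i, z i * Real.logb 2 (z i)

open Finset Real

theorem sum_mul_logb_sub_logb_nonpos {ι : Type*} [Fintype ι] {z q : ι → ℝ}
    (hz : ∀ i, 0 ≤ z i) (hq : ∀ i, 0 < q i) (hsum : ∑ i, q i ≤ ∑ i, z i) :
    ∑ i, z i * (logb 2 (q i) - logb 2 (z i)) ≤ 0 := by
  have hlog2 : 0 < log 2 := log_pos one_lt_two
  have hterm : ∀ i, z i * (logb 2 (q i) - logb 2 (z i)) ≤ (q i - z i) / log 2 := by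
    intro i
    rcases (hz i).eq_or_lt with hzi | hzi
    · rw [← hzi, zero_mul, sub_zero]
      exact div_nonneg (hq i).le hlog2.le
    · calc z i * (logb 2 (q i) - logb 2 (z i)) = z i * (log (q i / z i) / log 2) := by
            rw [log_div (hq i).ne' hzi.ne', logb, logb, sub_div]
        _ ≤ z i * ((q i / z i - 1) / log 2) := by
            gcongr; exact log_le_sub_one_of_pos (div_pos (hq i) hzi)
        _ = (q i - z i) / log 2 := by field_simp
  calc ∑ i, z i * (logb 2 (q i) - logb 2 (z i)) ≤ ∑ i, (q i - z i) / log 2 :=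
        sum_le_sum fun i _ => hterm i
    _ = (∑ i, q i - ∑ i, z i) / log 2 := by rw [← sum_div, sum_sub_distrib]
    _ ≤ 0 := div_nonpos_of_nonpos_of_nonneg (by linarith) hlog2.le

theorem isGreatest_shannonEnt_add_of_logb_eq {k : ℕ} {S : Set (Fin k → ℝ)} {c q a : Fin k → ℝ}
    {K : ℝ} (hS : ∀ z ∈ S, (∀ i, 0 ≤ z i) ∧ ∑ i, z i = 1 ∧ ∑ i, z i * a i = K)
    (hqS : q ∈ S) (hq : ∀ i, 0 < q i) (hc : ∀ i, logb 2 (c i) = logb 2 (q i) + a i) :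
    IsGreatest ((fun z => shannonEnt z + ∑ i, z i * logb 2 (c i)) '' S) K := by
  have hsplit : ∀ z : Fin k → ℝ, shannonEnt z + ∑ i, z i * logb 2 (c i)
      = ∑ i, z i * (logb 2 (q i) - logb 2 (z i)) + ∑ i, z i * a i := by
    intro z
    simp only [shannonEnt, hc, mul_add, mul_sub, sum_add_distrib, sum_sub_distrib]
    ring
  obtain ⟨-, hq1, hqa⟩ := hS q hqS
  refine ⟨⟨q, hqS, by simp [hsplit, hqa]⟩, ?_⟩
  rintro _ ⟨z, hzS, rfl⟩
  obtain ⟨hz0, hz1, hza⟩ := hS z hzS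
  have := sum_mul_logb_sub_logb_nonpos hz0 hq (by rw [hq1, hz1])
  simp only [hsplit, hza]
  linarith

section BlockNormalize

variable {ι : Type*} [Fintype ι] (p : ι → Prop) [DecidablePred p] (σ : ℝ) (w : ι → ℝ)

noncomputable def blockNormalize (i : ι) : ℝ :=
  if p i then σ * w i / ∑ j with p j, w j else (1 - σ) * w i / ∑ j with ¬p j, w j

theorem sum_filter_mul_blockNormalize (f : ι → ℝ) :
    ∑ i with p i, f i * blockNormalize p σ w i
      = σ * (∑ i with p i, f i * w i) / ∑ i with p i, w i := by
  rw [mul_sum, sum_div]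
  refine sum_congr rfl fun i hi => ?_
  rw [blockNormalize, if_pos (mem_filter.1 hi).2]
  ring

theorem sum_filter_not_mul_blockNormalize (f : ι → ℝ) :
    ∑ i with ¬p i, f i * blockNormalize p σ w i
      = (1 - σ) * (∑ i with ¬p i, f i * w i) / ∑ i with ¬p i, w i := by
  rw [mul_sum, sum_div]
  refine sum_congr rfl fun i hi => ?_
  rw [blockNormalize, if_neg (mem_filter.1 hi).2]
  ring

theorem sum_filter_blockNormalize (h : ∑ i with p i, w i ≠ 0) :
    ∑ i with p i, blockNormalize p σ w i = σ := by
  simpa [mul_div_assoc, h] using sum_filter_mul_blockNormalize p σ w fun _ => 1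

theorem sum_filter_not_blockNormalize (h : ∑ i with ¬p i, w i ≠ 0) :
    ∑ i with ¬p i, blockNormalize p σ w i = 1 - σ := by
  simpa [mul_div_assoc, h] using sum_filter_not_mul_blockNormalize p σ w fun _ => 1

theorem sum_blockNormalize (hp : ∑ i with p i, w i ≠ 0) (hnp : ∑ i with ¬p i, w i ≠ 0) :
    ∑ i, blockNormalize p σ w i = 1 := by
  rw [← sum_filter_add_sum_filter_not univ p, sum_filter_blockNormalize p σ w hp,
    sum_filter_not_blockNormalize p σ w hnp, add_sub_cancel]

theorem blockNormalize_pos (hw : ∀ i, 0 < w i) (hσ0 : 0 < σ) (hσ1 : σ < 1) (i : ι) :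
    0 < blockNormalize p σ w i := by
  unfold blockNormalize
  split_ifs with hi
  · exact div_pos (mul_pos hσ0 (hw i))
      (sum_pos (fun j _ => hw j) ⟨i, mem_filter.2 ⟨mem_univ i, hi⟩⟩)
  · exact div_pos (mul_pos (sub_pos.2 hσ1) (hw i))
      (sum_pos (fun j _ => hw j) ⟨i, mem_filter.2 ⟨mem_univ i, hi⟩⟩)

theorem logb_blockNormalize {b : ℝ} (hw : ∀ i, w i ≠ 0) (hσ0 : σ ≠ 0) (hσ1 : σ ≠ 1)
    (hp : ∑ i with p i, w i ≠ 0) (hnp : ∑ i with ¬p i, w i ≠ 0) (i : ι) :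
    logb b (blockNormalize p σ w i) = logb b (w i)
      + if p i then logb b σ - logb b (∑ j with p j, w j)
        else logb b (1 - σ) - logb b (∑ j with ¬p j, w j) := by
  unfold blockNormalize
  split_ifs
  · rw [logb_div (mul_ne_zero hσ0 (hw i)) hp, logb_mul hσ0 (hw i)]
    ring
  · rw [logb_div (mul_ne_zero (sub_ne_zero.2 hσ1.symm) (hw i)) hnp,
      logb_mul (sub_ne_zero.2 hσ1.symm) (hw i)]
    ring

theorem sum_mul_ite_sub_mul_eq {z g : ι → ℝ} {α β γ μ : ℝ} (hz1 : ∑ i, z i = 1)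
    (hzp : ∑ i with p i, z i = σ) (hzg : ∑ i, g i * z i = μ) :
    ∑ i, z i * ((if p i then β else α) - g i * γ) = σ * β + (1 - σ) * α - μ * γ := by
  have hznp : ∑ i with ¬p i, z i = 1 - σ := by
    rw [← hz1, ← sum_filter_add_sum_filter_not univ p, hzp, add_sub_cancel_left]
  simp only [mul_sub, sum_sub_distrib, mul_ite, sum_ite, ← sum_mul, hzp, hznp, ← hzg]
  rw [sum_mul]
  exact congrArg _ (sum_congr rfl fun i _ => by ring)

end BlockNormalize

theorem Fin.sum_filter_le_val_eq_sum_Icc {M : Type*} [AddCommMonoid M] (n t : ℕ) (f : ℕ → M) :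
    ∑ i ∈ univ.filter (fun i : Fin (n + 1) => t + 1 ≤ (i : ℕ)), f i
      = ∑ i ∈ Icc (t + 1) n, f i := by
  rw [sum_filter, Fin.sum_univ_eq_sum_range (fun i => if t + 1 ≤ i then f i else 0),
    ← sum_filter]
  congr 1
  ext i
  simp only [mem_filter, mem_range, mem_Icc]
  omega

theorem Fin.sum_filter_not_le_val_eq_sum_range {M : Type*} [AddCommMonoid M] {n t : ℕ}
    (htn : t ≤ n) (f : ℕ → M) :
    ∑ i ∈ univ.filter (fun i : Fin (n + 1) => ¬t + 1 ≤ (i : ℕ)), f i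
      = ∑ i ∈ range (t + 1), f i := by
  rw [sum_filter, Fin.sum_univ_eq_sum_range (fun i => if ¬t + 1 ≤ i then f i else 0),
    ← sum_filter]
  congr 1
  ext i
  simp only [mem_filter, mem_range]
  omega

theorem blockMean_eq_of_root {c : ℕ → ℝ} {n t : ℕ} {σ x : ℝ}
    (hA : ∑ i ∈ range (t + 1), c i * x ^ i ≠ 0) (hB : ∑ j ∈ Icc (t + 1) n, c j * x ^ j ≠ 0)
    (hroot : ∑ i ∈ range (t + 1), ∑ j ∈ Icc (t + 1) n,
      c i * c j * (σ * ((n : ℝ) - (j : ℝ)) - (i : ℝ) * (1 - σ)) * x ^ (i + j - t - 1) = 0) :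
    (1 - σ) * (∑ i ∈ range (t + 1), (i : ℝ) * (c i * x ^ i)) / ∑ i ∈ range (t + 1), c i * x ^ i
      + σ * (∑ j ∈ Icc (t + 1) n, (j : ℝ) * (c j * x ^ j)) / ∑ j ∈ Icc (t + 1) n, c j * x ^ j
      = σ * n := by
  have hshift : ∑ i ∈ range (t + 1), ∑ j ∈ Icc (t + 1) n,
      (c i * x ^ i) * (c j * x ^ j) * (σ * ((n : ℝ) - (j : ℝ)) - (i : ℝ) * (1 - σ)) = 0 := by
    rw [← zero_mul (x ^ (t + 1)), ← hroot, sum_mul]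
    refine sum_congr rfl fun i _ => ?_
    rw [sum_mul]
    refine sum_congr rfl fun j hj => ?_
    -- `j ≥ t + 1`, so the truncated exponent `i + j - t - 1` is exact.
    have hij : i + j = (i + j - t - 1) + (t + 1) := by have := (mem_Icc.1 hj).1; omega
    rw [mul_assoc _ (x ^ (i + j - t - 1)), ← pow_add, ← hij, pow_add]
    ring
  have hexpand : ∑ i ∈ range (t + 1), ∑ j ∈ Icc (t + 1) n,
      (c i * x ^ i) * (c j * x ^ j) * (σ * ((n : ℝ) - (j : ℝ)) - (i : ℝ) * (1 - σ))
      = σ * n * ((∑ i ∈ range (t + 1), c i * x ^ i) * (∑ j ∈ Icc (t + 1) n, c j * x ^ j))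
        - σ * ((∑ i ∈ range (t + 1), c i * x ^ i) * (∑ j ∈ Icc (t + 1) n, (j : ℝ) * (c j * x ^ j)))
        - (1 - σ) * ((∑ i ∈ range (t + 1), (i : ℝ) * (c i * x ^ i))
          * (∑ j ∈ Icc (t + 1) n, c j * x ^ j)) := by
    rw [sum_mul_sum, sum_mul_sum, sum_mul_sum]
    simp only [mul_sum, ← sum_sub_distrib]
    refine sum_congr rfl fun i _ => sum_congr rfl fun j _ => ?_
    ring
  rw [hexpand] at hshift
  rw [div_add_div _ _ hA hB, div_eq_iff (mul_ne_zero hA hB)]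
  linear_combination -hshift

theorem sum_val_mul_blockNormalize_of_root {c : ℕ → ℝ} {n t : ℕ} {σ x : ℝ} (htn : t ≤ n)
    (hA : ∑ i ∈ range (t + 1), c i * x ^ i ≠ 0) (hB : ∑ j ∈ Icc (t + 1) n, c j * x ^ j ≠ 0)
    (hroot : ∑ i ∈ range (t + 1), ∑ j ∈ Icc (t + 1) n,
      c i * c j * (σ * ((n : ℝ) - (j : ℝ)) - (i : ℝ) * (1 - σ)) * x ^ (i + j - t - 1) = 0) :
    ∑ i : Fin (n + 1), ((i : ℕ) : ℝ) * blockNormalize (fun i : Fin (n + 1) => t + 1 ≤ (i : ℕ)) σ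
      (fun i => c i * x ^ (i : ℕ)) i = σ * n := by
  rw [← sum_filter_add_sum_filter_not univ fun i : Fin (n + 1) => t + 1 ≤ (i : ℕ),
    sum_filter_mul_blockNormalize, sum_filter_not_mul_blockNormalize,
    Fin.sum_filter_le_val_eq_sum_Icc n t fun i => c i * x ^ i,
    Fin.sum_filter_le_val_eq_sum_Icc n t fun i => (i : ℝ) * (c i * x ^ i),
    Fin.sum_filter_not_le_val_eq_sum_range htn fun i => c i * x ^ i,
    Fin.sum_filter_not_le_val_eq_sum_range htn fun i => (i : ℝ) * (c i * x ^ i), add_comm]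
  exact blockMean_eq_of_root hA hB hroot

theorem lagrangian_max_closed_form_general (n t : ℕ)
    (htn : t < n) (σ : ℝ) (hσ0 : 0 < σ) (hσ1 : σ < 1) (x : ℝ) (hx : 0 < x)
    (hroot : ∑ i ∈ Finset.range (t + 1), ∑ j ∈ Finset.Icc (t + 1) n,
      (Nat.choose n i : ℝ) * (Nat.choose n j : ℝ) *
        (σ * ((n : ℝ) - (j : ℝ)) - (i : ℝ) * (1 - σ)) * x ^ (i + j - t - 1) = 0) :
    IsGreatest
      ((fun z : Fin (n + 1) → ℝ =>
          shannonEnt z + ∑ i, z i * Real.logb 2 (Nat.choose n (i : ℕ))) ''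
        {z : Fin (n + 1) → ℝ | (∀ i, 0 ≤ z i) ∧ ∑ i, z i = 1 ∧
          (∑ i : Fin (n + 1), ((i : ℕ) : ℝ) * z i = σ * n) ∧
          (∑ i ∈ Finset.univ.filter (fun i : Fin (n + 1) => t + 1 ≤ (i : ℕ)), z i = σ)})
      (binEnt σ - σ * n * Real.logb 2 x
        + σ * Real.logb 2 (∑ i ∈ Finset.Icc (t + 1) n, (Nat.choose n i : ℝ) * x ^ i)
        + (1 - σ) * Real.logb 2 (∑ i ∈ Finset.range (t + 1), (Nat.choose n i : ℝ) * x ^ i)) := by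
  set p : Fin (n + 1) → Prop := fun i => t + 1 ≤ (i : ℕ)
  set w : Fin (n + 1) → ℝ := fun i => (n.choose i : ℝ) * x ^ (i : ℕ)
  set A := ∑ i ∈ range (t + 1), (n.choose i : ℝ) * x ^ i
  set B := ∑ i ∈ Icc (t + 1) n, (n.choose i : ℝ) * x ^ i
  have hchoose (i : Fin (n + 1)) : 0 < (n.choose i : ℝ) :=
    Nat.cast_pos.2 (Nat.choose_pos (Nat.lt_succ_iff.1 i.isLt))
  have hw (i : Fin (n + 1)) : 0 < w i := mul_pos (hchoose i) (pow_pos hx _)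
  have hwA : ∑ i with ¬p i, w i = A :=
    Fin.sum_filter_not_le_val_eq_sum_range htn.le fun i => (n.choose i : ℝ) * x ^ i
  have hwB : ∑ i with p i, w i = B :=
    Fin.sum_filter_le_val_eq_sum_Icc n t fun i => (n.choose i : ℝ) * x ^ i
  have hA : 0 < A := hwA ▸ sum_pos (fun i _ => hw i) ⟨0, by simp [p]⟩
  have hB : 0 < B := hwB ▸ sum_pos (fun i _ => hw i) ⟨⟨t + 1, by omega⟩, by simp [p]⟩
  refine isGreatest_shannonEnt_add_of_logb_eq (q := blockNormalize p σ w)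
    (a := fun i => (if p i then logb 2 B - logb 2 σ else logb 2 A - logb 2 (1 - σ))
      - (i : ℕ) * logb 2 x) ?_ ?_ (blockNormalize_pos p σ w hw hσ0 hσ1) ?_
  · rintro z ⟨hz0, hz1, hzm, hzp⟩
    refine ⟨hz0, hz1, ?_⟩
    rw [sum_mul_ite_sub_mul_eq p σ hz1 hzp hzm, binEnt]
    ring
  · exact ⟨fun i => (blockNormalize_pos p σ w hw hσ0 hσ1 i).le,
      sum_blockNormalize p σ w (hwB ▸ hB.ne') (hwA ▸ hA.ne'),
      sum_val_mul_blockNormalize_of_root htn.le hA.ne' hB.ne' hroot,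
      sum_filter_blockNormalize p σ w (hwB ▸ hB.ne')⟩
  · intro i
    rw [logb_blockNormalize p σ w (fun i => (hw i).ne') hσ0.ne' hσ1.ne (hwB ▸ hB.ne')
      (hwA ▸ hA.ne'), hwA, hwB, logb_mul (hchoose i).ne' (pow_pos hx _).ne', logb_pow]
    split_ifs <;> ring

/-- with x > 0 the root of the stated polynomial equation, the closed form
    F_{n,t}(σ) = h(σ) - σn log₂ x + σ log₂(Σ_{i=t+1}^n C(n,i)xⁱ)
                 + (1-σ) log₂(Σ_{i=0}^t C(n,i)xⁱ)
    equals the maximum of g(z) = h(z) + Σᵢ zᵢ log₂ C(n,i) over probability vectors z on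
    {0,...,n} with Σᵢ i·zᵢ = σn and Σ_{i=t+1}^n zᵢ = σ. -/
theorem lagrangian_max_closed_form (n t d0 : ℕ) (ht : 1 ≤ t) (h2t : 2 * t + 1 ≤ d0)
    (htn : t < n) (σ : ℝ) (hσ0 : 0 < σ) (hσ1 : σ < 1) (x : ℝ) (hx : 0 < x)
    (hroot : ∑ i ∈ Finset.range (t + 1), ∑ j ∈ Finset.Icc (t + 1) n,
      (Nat.choose n i : ℝ) * (Nat.choose n j : ℝ) *
        (σ * ((n : ℝ) - (j : ℝ)) - (i : ℝ) * (1 - σ)) * x ^ (i + j - t - 1) = 0) :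
    IsGreatest
      ((fun z : Fin (n + 1) → ℝ =>
          shannonEnt z + ∑ i, z i * Real.logb 2 (Nat.choose n (i : ℕ))) ''
        {z : Fin (n + 1) → ℝ | (∀ i, 0 ≤ z i) ∧ ∑ i, z i = 1 ∧
          (∑ i : Fin (n + 1), ((i : ℕ) : ℝ) * z i = σ * n) ∧
          (∑ i ∈ Finset.univ.filter (fun i : Fin (n + 1) => t + 1 ≤ (i : ℕ)), z i = σ)})
      (binEnt σ - σ * n * Real.logb 2 x
        + σ * Real.logb 2 (∑ i ∈ Finset.Icc (t + 1) n, (Nat.choose n i : ℝ) * x ^ i)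
        + (1 - σ) * Real.logb 2 (∑ i ∈ Finset.range (t + 1), (Nat.choose n i : ℝ) * x ^ i)) :=
  lagrangian_max_closed_form_general n t htn σ hσ0 hσ1 x hx hroot
end
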